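/- arXiv:1905.09246 — 5 statements merged into one kernel-verified Lean document; each statement's English description precedes it below -/
import Mathlib

section
/- Let q ≥ 2 and n be an even positive integer, and let s be an integer with s ≥ n/2 + 1 and s ≤ n. Then for any integer l with 1 ≤ l ≤ q^{n/2}, we have ([s]_q - l + 1) / [n-s+1]_q ≥ 1, where [m]_q = (q^m - 1)/(q - 1). -/
/-!
Since `[m + 1]_q = [m]_q + q^m` and `[·]_q` is monotone, with `n = 2m` we get
`[n - s + 1]_q + l ≤ [m]_q + q^m = [m + 1]_q ≤ [s]_q`, because `n - s + 1 ≤ m < s` and `l ≤ q^m`.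
-/

/-- The q-analog `[m]_q = (q^m - 1)/(q - 1)`. -/
def qAn (q : ℚ) (m : ℕ) : ℚ := (q ^ m - 1) / (q - 1)

namespace qAn

variable {q : ℚ}

theorem succ (hq : q ≠ 1) (m : ℕ) : qAn q (m + 1) = qAn q m + q ^ m := by
  have : q - 1 ≠ 0 := sub_ne_zero.2 hq
  unfold qAn
  field_simp
  ring

theorem pos (hq : 1 < q) {m : ℕ} (hm : 0 < m) : 0 < qAn q m :=
  div_pos (sub_pos.2 (one_lt_pow₀ hq hm.ne')) (sub_pos.2 hq)

theorem monotone (hq : 1 < q) : Monotone (qAn q) := fun _ _ hkm =>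
  div_le_div_of_nonneg_right (sub_le_sub_right (pow_le_pow_right₀ hq.le hkm) 1)
    (sub_nonneg.2 hq.le)

theorem add_pow_le (hq : 1 < q) {k m s : ℕ} (hkm : k ≤ m) (hms : m < s) :
    qAn q k + q ^ m ≤ qAn q s :=
  calc qAn q k + q ^ m ≤ qAn q m + q ^ m := by gcongr; exact qAn.monotone hq hkm
    _ = qAn q (m + 1) := (succ hq.ne' m).symm
    _ ≤ qAn q s := qAn.monotone hq hms

end qAn

theorem stmt_1_general (q n s l : ℕ) (hq : 2 ≤ q) (hn : Even n)
    (hs1 : n / 2 + 1 ≤ s) (hs2 : s ≤ n) (hl2 : l ≤ q ^ (n / 2)) :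
    1 ≤ (qAn (q : ℚ) s - (l : ℚ) + 1) / qAn (q : ℚ) (n - s + 1) := by
  have hq' : (1 : ℚ) < q := by exact_mod_cast hq
  have hl : (l : ℚ) ≤ (q : ℚ) ^ (n / 2) := by exact_mod_cast hl2
  have hdual : n - s + 1 ≤ n / 2 := by
    obtain ⟨m, rfl⟩ := hn
    omega
  rw [one_le_div (qAn.pos hq' (Nat.succ_pos _))]
  linarith [qAn.add_pow_le hq' hdual hs1]

theorem stmt_1 (q n s l : ℕ) (hq : 2 ≤ q) (hn : Even n) (hn0 : 0 < n)
    (hs1 : n / 2 + 1 ≤ s) (hs2 : s ≤ n) (hl1 : 1 ≤ l) (hl2 : l ≤ q ^ (n / 2)) :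
    1 ≤ (qAn (q : ℚ) s - (l : ℚ) + 1) / qAn (q : ℚ) (n - s + 1) :=
  stmt_1_general q n s l hq hn hs1 hs2 hl2
end

section
/- Let q ≥ 2 and n be an odd integer, and let s be an integer with s ≥ (n+3)/2 and s ≤ n. Then for any integer l with 1 ≤ l ≤ q, we have [s]_q - (l-1)·[s-1]_q ≥ [n-s+1]_q, where [m]_q = (q^m - 1)/(q-1). -/
lemma qAn_eq_geom_sum {q : ℚ} (hq : q ≠ 1) (m : ℕ) : qAn q m = ∑ i ∈ Finset.range m, q ^ i :=
  (geom_sum_eq hq m).symm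

lemma qAn_succ {q : ℚ} (hq : q ≠ 1) (m : ℕ) : qAn q (m + 1) = q * qAn q m + 1 := by
  rw [qAn_eq_geom_sum hq, qAn_eq_geom_sum hq, Finset.sum_range_succ', Finset.mul_sum]
  simp only [pow_succ', pow_zero]

lemma qAn_nonneg {q : ℚ} (hq : 0 ≤ q) (m : ℕ) : 0 ≤ qAn q m := by
  by_cases h1 : q = 1
  · simp [qAn, h1]
  · rw [qAn_eq_geom_sum h1]
    positivity

lemma qAn_mono {q : ℚ} (hq : 0 ≤ q) : Monotone (qAn q) := by
  intro m k hmk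
  by_cases h1 : q = 1
  · simp [qAn, h1]
  · simp only [qAn_eq_geom_sum h1]
    exact Finset.sum_le_sum_of_subset_of_nonneg (Finset.range_mono hmk) fun i _ _ => by positivity

lemma qAn_le_qAn_succ_sub_mul {q c : ℚ} (hq : 1 < q) (hc : c ≤ q - 1) (m : ℕ) :
    qAn q m ≤ qAn q (m + 1) - c * qAn q m := by
  rw [qAn_succ hq.ne']
  nlinarith [qAn_nonneg (zero_le_one.trans hq.le) m]

theorem stmt_2_general (q n s l : ℕ) (hq : 2 ≤ q)
    (hs1 : (n + 3) / 2 ≤ s) (hs2 : s ≤ n) (hl2 : l ≤ q) :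
    qAn (q : ℚ) (n - s + 1) ≤ qAn (q : ℚ) s - ((l : ℚ) - 1) * qAn (q : ℚ) (s - 1) := by
  have hq' : (1 : ℚ) < q := by exact_mod_cast hq
  have hl' : (l : ℚ) - 1 ≤ q - 1 := by
    have : (l : ℚ) ≤ q := by exact_mod_cast hl2
    linarith
  obtain ⟨t, rfl⟩ : ∃ t, s = t + 1 := ⟨s - 1, by omega⟩
  calc qAn q (n - (t + 1) + 1) ≤ qAn q t := qAn_mono (Nat.cast_nonneg q) (by omega)
    _ ≤ qAn q (t + 1) - ((l : ℚ) - 1) * qAn q t := qAn_le_qAn_succ_sub_mul hq' hl' t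

theorem stmt_2 (q n s l : ℕ) (hq : 2 ≤ q) (hn : Odd n)
    (hs1 : (n + 3) / 2 ≤ s) (hs2 : s ≤ n) (hl1 : 1 ≤ l) (hl2 : l ≤ q) :
    qAn (q : ℚ) (n - s + 1) ≤ qAn (q : ℚ) s - ((l : ℚ) - 1) * qAn (q : ℚ) (s - 1) :=
  stmt_2_general q n s l hq hs1 hs2 hl2
end

section
/- Let V be an n-dimensional vector space over a finite field F_q with n even, and let k, l be integers with 2 ≤ k, l ≤ q^{n/2}. Then the maximum size of a family of subspaces of V containing no subposet V_k (one subspace properly below k incomparable-or-not subspaces all above it) and no subposet Λ_l equals the Gaussian binomial coefficient [n choose n/2]_q, attained by the family of all (n/2)-dimensional subspaces. -/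
/-- The family `𝓕` contains the poset `V_k` (one element below `k` distinct elements)
as a (not necessarily induced) subposet. -/
def ContainsVee {𝔽 V : Type*} [Field 𝔽] [AddCommGroup V] [Module 𝔽 V]
    (𝓕 : Set (Submodule 𝔽 V)) (k : ℕ) : Prop :=
  ∃ z ∈ 𝓕, ∃ S : Finset (Submodule 𝔽 V), ↑S ⊆ 𝓕 ∧ S.card = k ∧ ∀ A ∈ S, z < A

/-- The family `𝓕` contains the poset `Λ_l` (one element above `l` distinct elements)
as a (not necessarily induced) subposet. -/
def ContainsLam {𝔽 V : Type*} [Field 𝔽] [AddCommGroup V] [Module 𝔽 V]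
    (𝓕 : Set (Submodule 𝔽 V)) (l : ℕ) : Prop :=
  ∃ z ∈ 𝓕, ∃ S : Finset (Submodule 𝔽 V), ↑S ⊆ 𝓕 ∧ S.card = l ∧ ∀ A ∈ S, A < z

/-!
A family contains neither `V_k` nor `Λ_l` exactly when each member lies strictly below fewer
than `k` members and strictly above fewer than `l` members. Such a family can be pushed into the
middle layer without losing members. Write `[a]_q = 1 + q + ⋯ + q^(a-1)` and `n = 2m`. If the
largest dimension `D` of a member exceeds `m`, each member `F` of dimension `D` has `[D]_q`
hyperplanes, fewer than `l ≤ q^m` of which belong to the family, while a `(D-1)`-space lies in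
only `[n-D+1]_q ≤ [D]_q - q^m` spaces of dimension `D`. Hall's theorem then matches the top
layer injectively with hyperplanes outside the family, and replacing every top member by its
partner keeps all degrees bounded. Iterating brings all dimensions down to at most `m`; the
same argument applied to the annihilators in the dual space, which reverses inclusion and
exchanges `k` and `l`, then brings them up to exactly `m`.
-/

open Finset Module Function

theorem Finset.sum_range_pow_add_pow_le (q : ℕ) {a b m : ℕ} (hb : b ≤ m) (ha : m < a) :
    ∑ i ∈ range b, q ^ i + q ^ m ≤ ∑ i ∈ range a, q ^ i :=
  calc ∑ i ∈ range b, q ^ i + q ^ m ≤ ∑ i ∈ range m, q ^ i + q ^ m := by gcongr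
    _ = ∑ i ∈ range (m + 1), q ^ i := (sum_range_succ _ _).symm
    _ ≤ ∑ i ∈ range a, q ^ i := sum_le_sum_of_subset (range_subset_range.2 ha)

theorem Fintype.exists_injective_of_le_degree_of_degree_le {α β : Type*} [Fintype α] [Fintype β]
    (r : α → β → Prop) [DecidableRel r] {ρ : ℕ} (hρ : 0 < ρ) (hα : ∀ a, ρ ≤ #{b | r a b})
    (hβ : ∀ b, #{a | r a b} ≤ ρ) : ∃ f : α → β, Injective f ∧ ∀ a, r a (f a) := by
  refine (Fintype.all_card_le_filter_rel_iff_exists_injective r).1 fun A => ?_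
  have hcount := card_mul_le_card_mul r (s := A) (t := {b | ∃ a ∈ A, r a b}) (m := ρ) (n := ρ)
    (fun a ha => (hα a).trans (card_le_card fun b hb => ?_))
    (fun b _ => (card_le_card (filter_subset_filter _ (subset_univ A))).trans (hβ b))
  · exact Nat.le_of_mul_le_mul_right hcount hρ
  · simp only [bipartiteAbove, mem_filter, mem_univ, true_and] at hb ⊢
    exact ⟨⟨a, ha, hb⟩, hb⟩

section Combinatorics

open scoped Classical

variable {α β : Type*}

theorem Finset.card_sdiff_union_image {𝓕 E : Finset α} {φ : α → α} (hE : E ⊆ 𝓕)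
    (hφ : Set.InjOn φ E) (hφ𝓕 : ∀ F ∈ E, φ F ∉ 𝓕) : #(𝓕 \ E ∪ E.image φ) = #𝓕 := by
  have hdisj : Disjoint (𝓕 \ E) (E.image φ) := by
    refine disjoint_left.2 fun A hA hAφ => ?_
    obtain ⟨F, hF, rfl⟩ := mem_image.1 hAφ
    exact hφ𝓕 F hF (mem_sdiff.1 hA).1
  rw [card_union_of_disjoint hdisj, card_image_of_injOn hφ, card_sdiff_add_card_eq_card hE]

variable [PartialOrder α] [PartialOrder β]

def DegreeBounded (k l : ℕ) (𝓕 : Finset α) : Prop :=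
  ∀ z ∈ 𝓕, #{A ∈ 𝓕 | z < A} < k ∧ #{A ∈ 𝓕 | A < z} < l

variable {k l : ℕ} {𝓕 : Finset α}

theorem DegreeBounded.image_of_lt_iff (h : DegreeBounded k l 𝓕) {f : α → β} (hf : Injective f)
    (hlt : ∀ a b, f a < f b ↔ b < a) : DegreeBounded l k (𝓕.image f) := by
  simp only [DegreeBounded, forall_mem_image, filter_image, card_image_of_injective _ hf, hlt]
  exact fun z hz => (h z hz).symm

theorem DegreeBounded.sdiff_union_image (h : DegreeBounded k l 𝓕) {E : Finset α} {φ : α → α}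
    (hE : E ⊆ 𝓕) (hφ : ∀ F ∈ E, φ F < F)
    (hmax : ∀ F ∈ E, ∀ A ∈ 𝓕 \ E ∪ E.image φ, ¬ φ F < A) :
    DegreeBounded k l (𝓕 \ E ∪ E.image φ) := by
  set 𝓖 := 𝓕 \ E ∪ E.image φ
  have hup : ∀ z, #{A ∈ 𝓖 | z < A} ≤ #{A ∈ 𝓕 | z < A} := by
    intro z
    set S := {A ∈ 𝓕 | z < A}
    calc #{A ∈ 𝓖 | z < A} ≤ #(S \ E ∪ (S ∩ E).image φ) := by
          refine card_le_card fun A hA => ?_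
          obtain ⟨hA𝓖, hzA⟩ := mem_filter.1 hA
          rcases mem_union.1 hA𝓖 with hA' | hA'
          · obtain ⟨hA𝓕, hAE⟩ := mem_sdiff.1 hA'
            exact mem_union_left _ (mem_sdiff.2 ⟨mem_filter.2 ⟨hA𝓕, hzA⟩, hAE⟩)
          · obtain ⟨F, hF, rfl⟩ := mem_image.1 hA'
            exact mem_union_right _ (mem_image_of_mem _
              (mem_inter.2 ⟨mem_filter.2 ⟨hE hF, hzA.trans (hφ F hF)⟩, hF⟩))
      _ ≤ #(S \ E) + #(S ∩ E) := (card_union_le _ _).trans (Nat.add_le_add_left card_image_le _)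
      _ = #S := card_sdiff_add_card_inter S E
  have hdown : ∀ z ∈ 𝓖, ∀ z', z ≤ z' → {A ∈ 𝓖 | A < z} ⊆ {A ∈ 𝓕 | A < z'} := by
    intro z hz z' hzz' A hA
    obtain ⟨hA𝓖, hAz⟩ := mem_filter.1 hA
    rcases mem_union.1 hA𝓖 with hA' | hA'
    · exact mem_filter.2 ⟨(mem_sdiff.1 hA').1, hAz.trans_le hzz'⟩
    · obtain ⟨F, hF, rfl⟩ := mem_image.1 hA'
      exact absurd hAz (hmax F hF z hz)
  intro z hz
  rcases mem_union.1 hz with hz' | hz'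
  · have hz𝓕 := (mem_sdiff.1 hz').1
    exact ⟨(hup z).trans_lt (h z hz𝓕).1,
      (card_le_card (hdown z hz z le_rfl)).trans_lt (h z hz𝓕).2⟩
  · obtain ⟨F, hF, rfl⟩ := mem_image.1 hz'
    have hempty : {A ∈ 𝓖 | φ F < A} = ∅ := filter_eq_empty_iff.2 (hmax F hF)
    exact ⟨by simpa [hempty] using (Nat.zero_le _).trans_lt (h F (hE hF)).1,
      (card_le_card (hdown _ hz F (hφ F hF).le)).trans_lt (h F (hE hF)).2⟩

end Combinatorics

section Subspaces

variable {𝔽 V : Type*} [Field 𝔽] [AddCommGroup V] [Module 𝔽 V]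

instance {R M : Type*} [Semiring R] [AddCommMonoid M] [Module R M] [Finite M] :
    Finite (Submodule R M) :=
  Finite.of_injective _ SetLike.coe_injective

theorem not_containsVee_of_finrank_eq [FiniteDimensional 𝔽 V] {𝓕 : Set (Submodule 𝔽 V)}
    {r k : ℕ} (h𝓕 : ∀ W ∈ 𝓕, finrank 𝔽 W = r) (hk : k ≠ 0) : ¬ ContainsVee 𝓕 k := by
  rintro ⟨z, hz, S, hS, rfl, hlt⟩
  obtain ⟨A, hA⟩ := card_ne_zero.1 hk
  exact (Submodule.finrank_lt_finrank_of_lt (hlt A hA)).ne ((h𝓕 z hz).trans (h𝓕 A (hS hA)).symm)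

theorem not_containsLam_of_finrank_eq [FiniteDimensional 𝔽 V] {𝓕 : Set (Submodule 𝔽 V)}
    {r l : ℕ} (h𝓕 : ∀ W ∈ 𝓕, finrank 𝔽 W = r) (hl : l ≠ 0) : ¬ ContainsLam 𝓕 l := by
  rintro ⟨z, hz, S, hS, rfl, hlt⟩
  obtain ⟨A, hA⟩ := card_ne_zero.1 hl
  exact (Submodule.finrank_lt_finrank_of_lt (hlt A hA)).ne ((h𝓕 A (hS hA)).trans (h𝓕 z hz).symm)

open scoped Classical in
theorem degreeBounded_of_not_containsVee_of_not_containsLam {𝓕 : Set (Submodule 𝔽 V)}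
    (hfin : 𝓕.Finite) {k l : ℕ} (hV : ¬ ContainsVee 𝓕 k) (hL : ¬ ContainsLam 𝓕 l) :
    DegreeBounded k l hfin.toFinset := by
  intro z hz
  rw [hfin.mem_toFinset] at hz
  constructor
  · by_contra! hk
    obtain ⟨S, hS, hSk⟩ := exists_subset_card_eq hk
    exact hV ⟨z, hz, S, fun A hA => hfin.mem_toFinset.1 (mem_filter.1 (hS hA)).1, hSk,
      fun A hA => (mem_filter.1 (hS hA)).2⟩
  · by_contra! hl
    obtain ⟨S, hS, hSl⟩ := exists_subset_card_eq hl
    exact hL ⟨z, hz, S, fun A hA => hfin.mem_toFinset.1 (mem_filter.1 (hS hA)).1, hSl,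
      fun A hA => (mem_filter.1 (hS hA)).2⟩

theorem Subspace.dualAnnihilator_lt_dualAnnihilator_iff {W W' : Subspace 𝔽 V} :
    W.dualAnnihilator < W'.dualAnnihilator ↔ W' < W := by
  simp only [lt_iff_le_not_ge, dualAnnihilator_le_dualAnnihilator_iff]

open scoped Classical in
theorem DegreeBounded.image_dualAnnihilator {k l : ℕ} {𝓕 : Finset (Submodule 𝔽 V)}
    (h : DegreeBounded k l 𝓕) : DegreeBounded l k (𝓕.image Submodule.dualAnnihilator) :=
  h.image_of_lt_iff (fun _ _ => Subspace.dualAnnihilator_inj.1)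
    fun _ _ => Subspace.dualAnnihilator_lt_dualAnnihilator_iff

variable [FiniteDimensional 𝔽 V]

theorem Submodule.finrank_comap_mkQ (U : Submodule 𝔽 V) (L : Submodule 𝔽 (V ⧸ U)) :
    finrank 𝔽 (L.comap U.mkQ) = finrank 𝔽 L + finrank 𝔽 U := by
  have hrange : LinearMap.range (U.mkQ.domRestrict (L.comap U.mkQ)) = L := by
    rw [LinearMap.range_domRestrict, map_comap_eq_of_surjective U.mkQ_surjective]
  have hker : finrank 𝔽 (LinearMap.ker (U.mkQ.domRestrict (L.comap U.mkQ))) = finrank 𝔽 U := by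
    rw [LinearMap.ker_domRestrict, ker_mkQ]
    exact (comapSubtypeEquivOfLe fun x hx => by simp [(Quotient.mk_eq_zero U).2 hx]).finrank_eq
  rw [← LinearMap.finrank_range_add_finrank_ker (U.mkQ.domRestrict (L.comap U.mkQ)), hrange, hker]

theorem Submodule.card_covers [Finite 𝔽] (U : Submodule 𝔽 V) :
    Nat.card {W : Submodule 𝔽 V // U < W ∧ finrank 𝔽 W = finrank 𝔽 U + 1} =
      ∑ i ∈ range (finrank 𝔽 V - finrank 𝔽 U), Nat.card 𝔽 ^ i := by
  let e : {L : Submodule 𝔽 (V ⧸ U) // finrank 𝔽 L = 1} ≃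
      {W : Submodule 𝔽 V // U < W ∧ finrank 𝔽 W = finrank 𝔽 U + 1} :=
    { toFun L := ⟨L.1.comap U.mkQ, by
        refine lt_of_le_of_ne (fun x hx => ?_) fun hU => ?_
        · simp [(Quotient.mk_eq_zero U).2 hx]
        · have hrank := U.finrank_comap_mkQ L
          rw [← hU, L.2] at hrank
          omega,
        by rw [U.finrank_comap_mkQ, L.2, add_comm]⟩
      invFun W := ⟨W.1.map U.mkQ, by
        have hrank := U.finrank_comap_mkQ (W.1.map U.mkQ)
        rw [comap_map_mkQ, sup_eq_right.2 W.2.1.le, W.2.2] at hrank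
        omega⟩
      left_inv L := Subtype.ext (map_comap_eq_of_surjective U.mkQ_surjective L.1)
      right_inv W := Subtype.ext (by simpa using W.2.1.le) }
  rw [← Nat.card_congr e, ← Nat.card_congr (Projectivization.equivSubmodule 𝔽 (V ⧸ U)),
    Projectivization.card_of_finrank 𝔽 _ (finrank_quotient U)]

theorem Subspace.finrank_dualAnnihilator (W : Subspace 𝔽 V) :
    finrank 𝔽 W.dualAnnihilator = finrank 𝔽 V - finrank 𝔽 W := by
  have := W.finrank_add_finrank_dualAnnihilator_eq
  omega

theorem Submodule.card_lowerCovers [Finite 𝔽] (W : Submodule 𝔽 V) :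
    Nat.card {U : Submodule 𝔽 V // U < W ∧ finrank 𝔽 U + 1 = finrank 𝔽 W} =
      ∑ i ∈ range (finrank 𝔽 W), Nat.card 𝔽 ^ i := by
  let e := (Subspace.orderIsoFiniteDimensional (K := 𝔽) (V := V)).toEquiv.trans OrderDual.ofDual
  have he : ∀ U, e U = U.dualAnnihilator := fun _ => rfl
  rw [Nat.card_congr (e.subtypeEquiv (q := fun X => W.dualAnnihilator < X ∧
      finrank 𝔽 X = finrank 𝔽 W.dualAnnihilator + 1) fun U => ?_), card_covers,
    Subspace.dual_finrank_eq, Subspace.finrank_dualAnnihilator]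
  · rw [Nat.sub_sub_self W.finrank_le]
  · rw [he, Subspace.dualAnnihilator_lt_dualAnnihilator_iff, Subspace.finrank_dualAnnihilator,
      Subspace.finrank_dualAnnihilator]
    have := U.finrank_le
    have := W.finrank_le
    exact and_congr_right fun _ => by omega

theorem Subspace.card_finrank_eq_dual {r : ℕ} (hr : r ≤ finrank 𝔽 V) :
    Nat.card {X : Subspace 𝔽 (Dual 𝔽 V) // finrank 𝔽 X = finrank 𝔽 V - r} =
      Nat.card {W : Subspace 𝔽 V // finrank 𝔽 W = r} := by
  let e := (Subspace.orderIsoFiniteDimensional (K := 𝔽) (V := V)).toEquiv.trans OrderDual.ofDual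
  refine (Nat.card_congr (e.subtypeEquiv fun W => ?_)).symm
  change _ ↔ finrank 𝔽 W.dualAnnihilator = _
  rw [Subspace.finrank_dualAnnihilator]
  have := W.finrank_le
  omega

end Subspaces

section MiddleLayer

open scoped Classical

variable {𝔽 V : Type*} [Field 𝔽] [Finite 𝔽] [AddCommGroup V] [Module 𝔽 V]
  [FiniteDimensional 𝔽 V] {k l m D : ℕ}

theorem Submodule.sum_range_pow_le_card_lowerCovers_notMem [Fintype (Submodule 𝔽 V)]
    (𝓕 : Finset (Submodule 𝔽 V)) (F : Submodule 𝔽 V) :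
    ∑ i ∈ range (finrank 𝔽 F), Nat.card 𝔽 ^ i ≤
      #{W | W < F ∧ finrank 𝔽 W + 1 = finrank 𝔽 F ∧ W ∉ 𝓕} + #{A ∈ 𝓕 | A < F} := by
  rw [← card_lowerCovers, Nat.card_eq_fintype_card, Fintype.card_subtype]
  refine (card_le_card fun W hW => ?_).trans (card_union_le _ _)
  simp only [mem_union, mem_filter, mem_univ, true_and] at hW ⊢
  by_cases hW𝓕 : W ∈ 𝓕
  · exact Or.inr ⟨hW𝓕, hW.1⟩
  · exact Or.inl ⟨hW.1, hW.2, hW𝓕⟩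

theorem exists_injOn_lowerCover_notMem {𝓕 E : Finset (Submodule 𝔽 V)}
    (hn : finrank 𝔽 V ≤ m + m) (hl : l ≤ Nat.card 𝔽 ^ m) (hmD : m < D)
    (hE : ∀ F ∈ E, finrank 𝔽 F = D ∧ #{A ∈ 𝓕 | A < F} < l) :
    ∃ φ : Submodule 𝔽 V → Submodule 𝔽 V, Set.InjOn φ E ∧
      ∀ F ∈ E, φ F < F ∧ finrank 𝔽 (φ F) + 1 = D ∧ φ F ∉ 𝓕 := by
  have := Module.finite_of_finite 𝔽 (M := V)
  have := Fintype.ofFinite (Submodule 𝔽 V)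
  set ρ := ∑ i ∈ range (finrank 𝔽 V - D + 1), Nat.card 𝔽 ^ i
  have hleft (F : E) : ρ ≤ #{W | W < F.1 ∧ finrank 𝔽 W + 1 = D ∧ W ∉ 𝓕} := by
    obtain ⟨hFD, hFl⟩ := hE F.1 F.2
    have hcount := Submodule.sum_range_pow_le_card_lowerCovers_notMem 𝓕 F.1
    rw [hFD] at hcount
    have := F.1.finrank_le
    have := sum_range_pow_add_pow_le (Nat.card 𝔽) (b := finrank 𝔽 V - D + 1) (by omega) hmD
    omega
  have hright (W : Submodule 𝔽 V) :
      #{F : E | W < F.1 ∧ finrank 𝔽 W + 1 = D ∧ W ∉ 𝓕} ≤ ρ := by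
    obtain hempty | ⟨F₀, hF₀⟩ :=
      ({F : E | W < F.1 ∧ finrank 𝔽 W + 1 = D ∧ W ∉ 𝓕} : Finset E).eq_empty_or_nonempty
    · rw [hempty, card_empty]
      exact Nat.zero_le ρ
    have hWD : finrank 𝔽 W + 1 = D := (mem_filter.1 hF₀).2.2.1
    have hDn : D ≤ finrank 𝔽 V := (hE F₀.1 F₀.2).1 ▸ F₀.1.finrank_le
    calc #{F : E | W < F.1 ∧ finrank 𝔽 W + 1 = D ∧ W ∉ 𝓕} ≤ #{F | W < F ∧ finrank 𝔽 F = finrank 𝔽 W + 1} := by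
          refine card_le_card_of_injOn Subtype.val (fun F hF => ?_) Subtype.val_injective.injOn
          simp only [coe_filter, mem_univ, true_and, Set.mem_ofPred_eq] at hF ⊢
          exact ⟨hF.1, (hE F.1 F.2).1.trans hF.2.1.symm⟩
      _ = ρ := by
          rw [← Fintype.card_subtype, ← Nat.card_eq_fintype_card, Submodule.card_covers,
            show finrank 𝔽 V - finrank 𝔽 W = finrank 𝔽 V - D + 1 by omega]
  have hρ : 0 < ρ := sum_pos (fun i _ => pow_pos Finite.card_pos i) nonempty_range_add_one
  obtain ⟨f, hf, hfr⟩ := Fintype.exists_injective_of_le_degree_of_degree_le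
    (fun (F : E) W => W < F.1 ∧ finrank 𝔽 W + 1 = D ∧ W ∉ 𝓕) hρ hleft hright
  obtain ⟨φ, hφ⟩ : ∃ φ : Submodule 𝔽 V → Submodule 𝔽 V, ∀ F (hF : F ∈ E), φ F = f ⟨F, hF⟩ :=
    ⟨fun F => if h : F ∈ E then f ⟨F, h⟩ else F, fun F hF => dif_pos hF⟩
  refine ⟨φ, fun F hF F' hF' h => ?_, fun F hF => ?_⟩
  · rw [hφ F hF, hφ F' hF'] at h
    exact congrArg Subtype.val (hf h)
  · rw [hφ F hF]
    exact hfr ⟨F, hF⟩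

theorem DegreeBounded.exists_finrank_lt {𝓕 : Finset (Submodule 𝔽 V)} (h : DegreeBounded k l 𝓕)
    (hn : finrank 𝔽 V ≤ m + m) (hl : l ≤ Nat.card 𝔽 ^ m) (hmD : m < D)
    (hD : ∀ z ∈ 𝓕, finrank 𝔽 z ≤ D) :
    ∃ 𝓖 : Finset (Submodule 𝔽 V), DegreeBounded k l 𝓖 ∧ #𝓖 = #𝓕 ∧
      ∀ z ∈ 𝓖, finrank 𝔽 z < D ∧ (m ≤ finrank 𝔽 z ∨ z ∈ 𝓕) := by
  set E : Finset (Submodule 𝔽 V) := {F ∈ 𝓕 | finrank 𝔽 F = D}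
  have hE : E ⊆ 𝓕 := filter_subset _ _
  obtain ⟨φ, hφinj, hφ⟩ := exists_injOn_lowerCover_notMem (𝓕 := 𝓕) (E := E) hn hl hmD
    fun F hF => ⟨(mem_filter.1 hF).2, (h F (hE hF)).2⟩
  have hrank : ∀ z ∈ 𝓕 \ E ∪ E.image φ, finrank 𝔽 z < D ∧ (m ≤ finrank 𝔽 z ∨ z ∈ 𝓕) := by
    intro z hz
    rcases mem_union.1 hz with hz | hz
    · obtain ⟨hz𝓕, hzE⟩ := mem_sdiff.1 hz
      exact ⟨(hD z hz𝓕).lt_of_ne fun hzD => hzE (mem_filter.2 ⟨hz𝓕, hzD⟩), Or.inr hz𝓕⟩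
    · obtain ⟨F, hF, rfl⟩ := mem_image.1 hz
      have := (hφ F hF).2.1
      exact ⟨by omega, Or.inl (by omega)⟩
  refine ⟨𝓕 \ E ∪ E.image φ, h.sdiff_union_image hE (fun F hF => (hφ F hF).1) ?_,
    card_sdiff_union_image hE hφinj (fun F hF => (hφ F hF).2.2), hrank⟩
  intro F hF A hA hlt
  have := Submodule.finrank_lt_finrank_of_lt hlt
  have := (hrank A hA).1
  have := (hφ F hF).2.1
  omega

/- The disjunct `z ∈ 𝓕` records that members of dimension below `m` were already in `𝓕`, so a
family of dimensions `≥ m` is moved exactly into dimension `m`. -/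
theorem DegreeBounded.exists_finrank_le {𝓕 : Finset (Submodule 𝔽 V)} (h : DegreeBounded k l 𝓕)
    (hn : finrank 𝔽 V ≤ m + m) (hl : l ≤ Nat.card 𝔽 ^ m) :
    ∃ 𝓖 : Finset (Submodule 𝔽 V), DegreeBounded k l 𝓖 ∧ #𝓖 = #𝓕 ∧
      ∀ z ∈ 𝓖, finrank 𝔽 z ≤ m ∧ (m ≤ finrank 𝔽 z ∨ z ∈ 𝓕) := by
  suffices key : ∀ j (𝓕 : Finset (Submodule 𝔽 V)), DegreeBounded k l 𝓕 →
      (∀ z ∈ 𝓕, finrank 𝔽 z ≤ m + j) → ∃ 𝓖 : Finset (Submodule 𝔽 V), DegreeBounded k l 𝓖 ∧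
        #𝓖 = #𝓕 ∧ ∀ z ∈ 𝓖, finrank 𝔽 z ≤ m ∧ (m ≤ finrank 𝔽 z ∨ z ∈ 𝓕) from
    key _ 𝓕 h fun z _ => z.finrank_le.trans (Nat.le_add_left _ m)
  intro j
  induction j with
  | zero => exact fun 𝓕 h h𝓕 => ⟨𝓕, h, rfl, fun z hz => ⟨h𝓕 z hz, Or.inr hz⟩⟩
  | succ j ih =>
    intro 𝓕 h h𝓕
    obtain ⟨𝓖, hG, hG𝓕, hGrank⟩ := h.exists_finrank_lt hn hl (by omega) h𝓕
    obtain ⟨𝓗, hH, hH𝓖, hHrank⟩ := ih 𝓖 hG fun z hz => by have := (hGrank z hz).1; omega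
    refine ⟨𝓗, hH, hH𝓖.trans hG𝓕, fun z hz => ⟨(hHrank z hz).1, ?_⟩⟩
    exact (hHrank z hz).2.elim Or.inl fun hz𝓖 => (hGrank z hz𝓖).2

theorem DegreeBounded.card_le_card_finrank_eq {𝓕 : Finset (Submodule 𝔽 V)}
    (h : DegreeBounded k l 𝓕) (hn : finrank 𝔽 V = m + m) (hk : k ≤ Nat.card 𝔽 ^ m)
    (hl : l ≤ Nat.card 𝔽 ^ m) : #𝓕 ≤ Nat.card {W : Submodule 𝔽 V // finrank 𝔽 W = m} := by
  obtain ⟨𝓖, hG, hG𝓕, hGrank⟩ := h.exists_finrank_le hn.le hl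
  obtain ⟨𝓗, hH, hH𝓖, hHrank⟩ := hG.image_dualAnnihilator.exists_finrank_le
    (by rw [Subspace.dual_finrank_eq, hn]) hk
  have hmiddle : ∀ X ∈ 𝓗, finrank 𝔽 X = m := by
    intro X hX
    obtain ⟨hXm, hmX | hX𝓖⟩ := hHrank X hX
    · exact le_antisymm hXm hmX
    · obtain ⟨W, hW, rfl⟩ := mem_image.1 hX𝓖
      have := (hGrank W hW).1
      rw [Subspace.finrank_dualAnnihilator, hn] at hXm ⊢
      omega
  have := Module.finite_of_finite 𝔽 (M := Dual 𝔽 V)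
  calc #𝓕 = #𝓗 := by
        rw [hH𝓖, card_image_of_injective _ fun _ _ => Subspace.dualAnnihilator_inj.1, hG𝓕]
    _ ≤ Nat.card {X : Subspace 𝔽 (Dual 𝔽 V) // finrank 𝔽 X = m} := by
        rw [← Set.ncard_coe_finset, ← Set.coe_ofPred, Nat.card_coe_set_eq]
        exact Set.ncard_le_ncard fun X hX => hmiddle X hX
    _ = Nat.card {W : Submodule 𝔽 V // finrank 𝔽 W = m} := by
        rw [← Subspace.card_finrank_eq_dual (V := V) (r := m) (by omega), hn, Nat.add_sub_cancel]

end MiddleLayer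

theorem stmt_4 {𝔽 V : Type*} [Field 𝔽] [Fintype 𝔽] [AddCommGroup V] [Module 𝔽 V]
    [FiniteDimensional 𝔽 V] (q n k l : ℕ) (hq : Fintype.card 𝔽 = q)
    (hn : Module.finrank 𝔽 V = n) (hne : Even n)
    (hk1 : 2 ≤ k) (hk2 : k ≤ q ^ (n / 2)) (hl1 : 2 ≤ l) (hl2 : l ≤ q ^ (n / 2)) :
    IsGreatest {m | ∃ 𝓕 : Set (Submodule 𝔽 V),
        ¬ ContainsVee 𝓕 k ∧ ¬ ContainsLam 𝓕 l ∧ 𝓕.ncard = m}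
      {W : Submodule 𝔽 V | Module.finrank 𝔽 W = n / 2}.ncard ∧
    ¬ ContainsVee {W : Submodule 𝔽 V | Module.finrank 𝔽 W = n / 2} k ∧
    ¬ ContainsLam {W : Submodule 𝔽 V | Module.finrank 𝔽 W = n / 2} l := by
  obtain ⟨m, rfl⟩ := hne
  rw [show (m + m) / 2 = m by omega] at hk2 hl2 ⊢
  rw [← hq, ← Nat.card_eq_fintype_card] at hk2 hl2
  have hV := not_containsVee_of_finrank_eq (𝓕 := {W : Submodule 𝔽 V | finrank 𝔽 W = m})
    (fun _ hW => hW) (by omega : k ≠ 0)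
  have hL := not_containsLam_of_finrank_eq (𝓕 := {W : Submodule 𝔽 V | finrank 𝔽 W = m})
    (fun _ hW => hW) (by omega : l ≠ 0)
  refine ⟨⟨⟨_, hV, hL, rfl⟩, ?_⟩, hV, hL⟩
  rintro _ ⟨𝓕, h𝓕V, h𝓕L, rfl⟩
  have := Module.finite_of_finite 𝔽 (M := V)
  rw [Set.ncard_eq_toFinset_card 𝓕 𝓕.toFinite, ← Nat.card_coe_set_eq]
  exact (degreeBounded_of_not_containsVee_of_not_containsLam 𝓕.toFinite h𝓕V h𝓕L
    ).card_le_card_finrank_eq hn hk2 hl2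
end

section
/- Let V be an n-dimensional vector space over F_q with basis v₁,...,vₙ, and let H be a family of subspaces each spanned by a subset of the basis (a simple family). Let P be a finite poset, F a P-free family of subspaces of V, and α(H,P) the maximum size of a P-free subfamily of H. Then Σ_{F ∈ F} N_{dim F}(H) / [n choose dim F]_q ≤ α(H, P), where N_i(H) is the number of i-dimensional subspaces in H. -/
/-! Average over `GL(V)`. Since `GL(V)` acts transitively on the subspaces of each dimension,
`N_{dim F}(𝓗) / [n, dim F]_q` is the probability that a uniformly random `g ∈ GL(V)` maps `F`
into `𝓗`. Summing over `F ∈ 𝓕` gives the expected size of `{F ∈ 𝓕 | g • F ∈ 𝓗}`, and for every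
`g` the image `g • {F ∈ 𝓕 | g • F ∈ 𝓗}` is a `P`-free subfamily of `𝓗`, so it has at most `α`
members. -/

/-- The family `𝓕` contains the poset `P` as a (not necessarily induced) subposet. -/
def ContainsCopy {𝔽 V : Type*} [Field 𝔽] [AddCommGroup V] [Module 𝔽 V]
    (P : Type*) [PartialOrder P] (𝓕 : Set (Submodule 𝔽 V)) : Prop :=
  ∃ φ : P → Submodule 𝔽 V, Function.Injective φ ∧ (∀ a, φ a ∈ 𝓕) ∧
    ∀ a b : P, a ≤ b → φ a ≤ φ b

open MulAction Module Finset
open scoped Pointwise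

namespace MulAction

variable {G X : Type*} [Group G] [MulAction G X]

theorem ncard_setOf_smul_mem (x : X) (H : Set X) :
    {g : G | g • x ∈ H}.ncard = (H ∩ orbit G x).ncard * Nat.card (stabilizer G x) := by
  rw [← Nat.card_coe_set_eq, ← Nat.card_coe_set_eq, ← Nat.card_prod]
  -- The orbit component of the orbit-stabilizer bijection `G ≃ orbit × stabilizer` is `g ↦ g • x`.
  calc Nat.card {g : G | g • x ∈ H}
      = Nat.card {p : orbit G x × stabilizer G x // (p.1 : X) ∈ H} :=
        Nat.card_congr <| (orbitProdStabilizerEquivGroup G x).symm.subtypeEquiv fun g => by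
          simp [orbitProdStabilizerEquivGroup, Subgroup.groupEquivQuotientProdSubgroup]
    _ = Nat.card ({y : orbit G x // (y : X) ∈ H} × stabilizer G x) :=
        Nat.card_congr <| Equiv.prodSubtypeFstEquivSubtypeProd (β := stabilizer G x)
          (p := fun y : orbit G x => (y : X) ∈ H)
    _ = Nat.card (↥(H ∩ orbit G x) × stabilizer G x) :=
        Nat.card_congr <| ((Equiv.subtypeSubtypeEquivSubtypeInter _ _).trans
          (Equiv.subtypeEquivRight fun _ => and_comm)).prodCongr (Equiv.refl _)

theorem ncard_inter_orbit_div_ncard_orbit [Finite G] (x : X) (H : Set X) :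
    ((H ∩ orbit G x).ncard : ℚ) / (orbit G x).ncard =
      ({g : G | g • x ∈ H}.ncard : ℚ) / Nat.card G := by
  have hG := ncard_setOf_smul_mem (G := G) x Set.univ
  simp only [Set.mem_univ, Set.ofPred_true, Set.ncard_univ, Set.univ_inter] at hG
  have hstab : (Nat.card (stabilizer G x) : ℚ) ≠ 0 := by exact_mod_cast Nat.card_pos.ne'
  rw [ncard_setOf_smul_mem x H, hG]
  push_cast
  exact (mul_div_mul_right _ _ hstab).symm

theorem sum_ncard_inter_orbit_div_le [Finite G] (H : Set X) [DecidablePred (· ∈ H)]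
    (𝓕 : Finset X) {α : ℕ} (h : ∀ g : G, #{F ∈ 𝓕 | g • F ∈ H} ≤ α) :
    ∑ F ∈ 𝓕, ((H ∩ orbit G F).ncard : ℚ) / (orbit G F).ncard ≤ α := by
  have := Fintype.ofFinite G
  have hcount (F : X) : {g : G | g • F ∈ H}.ncard = #{g : G | g • F ∈ H} := by
    rw [Set.ncard_eq_toFinset_card', Set.toFinset_ofPred]
  have hdouble : ∑ F ∈ 𝓕, #{g : G | g • F ∈ H} = ∑ g : G, #{F ∈ 𝓕 | g • F ∈ H} :=
    sum_card_bipartiteAbove_eq_sum_card_bipartiteBelow (fun F (g : G) => g • F ∈ H)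
  have hG : (Nat.card G : ℚ) ≠ 0 := by exact_mod_cast Nat.card_pos.ne'
  calc ∑ F ∈ 𝓕, ((H ∩ orbit G F).ncard : ℚ) / (orbit G F).ncard
      = ((∑ F ∈ 𝓕, #{g : G | g • F ∈ H} : ℕ) : ℚ) / Nat.card G := by
        simp only [ncard_inter_orbit_div_ncard_orbit, hcount, ← sum_div, Nat.cast_sum]
    _ ≤ ((Nat.card G * α : ℕ) : ℚ) / Nat.card G := by
        gcongr
        rw [hdouble, Nat.card_eq_fintype_card, ← Finset.card_univ, ← smul_eq_mul]
        exact sum_le_card_nsmul _ _ _ fun g _ => h g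
    _ = α := by push_cast; field_simp

end MulAction

section Subspaces

variable {𝔽 V : Type*} [DivisionRing 𝔽] [AddCommGroup V] [Module 𝔽 V] [FiniteDimensional 𝔽 V]

theorem Submodule.exists_linearEquiv_map_eq_of_finrank_eq {F W : Submodule 𝔽 V}
    (h : finrank 𝔽 F = finrank 𝔽 W) : ∃ e : V ≃ₗ[𝔽] V, F.map (e : V →ₗ[𝔽] V) = W := by
  obtain ⟨F', hF'⟩ := F.exists_isCompl
  obtain ⟨W', hW'⟩ := W.exists_isCompl
  have h' : finrank 𝔽 F' = finrank 𝔽 W' := by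
    have := Submodule.finrank_add_eq_of_isCompl hF'
    have := Submodule.finrank_add_eq_of_isCompl hW'
    omega
  let e : V ≃ₗ[𝔽] V := (Submodule.prodEquivOfIsCompl F F' hF').symm ≪≫ₗ
    ((LinearEquiv.ofFinrankEq _ _ h).prodCongr (LinearEquiv.ofFinrankEq _ _ h')) ≪≫ₗ
    Submodule.prodEquivOfIsCompl W W' hW'
  refine ⟨e, Submodule.eq_of_le_of_finrank_eq ?_ (by rw [LinearEquiv.finrank_map_eq, h])⟩
  rintro _ ⟨x, hx, rfl⟩
  have hx' : (F.prodEquivOfIsCompl F' hF').symm x = ((⟨x, hx⟩ : ↥F), 0) :=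
    Submodule.prodEquivOfIsCompl_symm_apply_left F F' hF' ⟨x, hx⟩
  simp [e, hx']

theorem Submodule.orbit_linearEquiv (F : Submodule 𝔽 V) :
    orbit (V ≃ₗ[𝔽] V) F = {W : Submodule 𝔽 V | finrank 𝔽 W = finrank 𝔽 F} := by
  ext W
  constructor
  · rintro ⟨g, rfl⟩
    exact LinearEquiv.finrank_map_eq g F
  · intro hW
    exact Submodule.exists_linearEquiv_map_eq_of_finrank_eq hW.symm

end Subspaces

section ContainsCopy

variable {𝔽 V P : Type*} [Field 𝔽] [AddCommGroup V] [Module 𝔽 V] [PartialOrder P]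
  {𝓐 𝓑 : Set (Submodule 𝔽 V)}

theorem ContainsCopy.mono (h : 𝓐 ⊆ 𝓑) : ContainsCopy P 𝓐 → ContainsCopy P 𝓑 :=
  fun ⟨φ, hinj, hmem, hmono⟩ => ⟨φ, hinj, fun a => h (hmem a), hmono⟩

theorem ContainsCopy.smul (g : V ≃ₗ[𝔽] V) : ContainsCopy P 𝓐 → ContainsCopy P (g • 𝓐) :=
  fun ⟨φ, hinj, hmem, hmono⟩ => ⟨(g • φ ·), (MulAction.injective g).comp hinj,
    fun a => Set.smul_mem_smul_set (hmem a), fun a b hab => smul_le_smul_left g (hmono a b hab)⟩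

theorem card_filter_smul_mem_le_of_not_containsCopy {𝓗 : Set (Submodule 𝔽 V)} [DecidablePred (· ∈ 𝓗)] {α : ℕ}
    (hα : ∀ 𝓖 ⊆ 𝓗, ¬ ContainsCopy P 𝓖 → 𝓖.ncard ≤ α) {𝓕 : Finset (Submodule 𝔽 V)}
    (hF : ¬ ContainsCopy P (𝓕 : Set (Submodule 𝔽 V))) (g : V ≃ₗ[𝔽] V) :
    #{F ∈ 𝓕 | g • F ∈ 𝓗} ≤ α := by
  set B := {F ∈ 𝓕 | g • F ∈ 𝓗}
  have hsub : g • (B : Set (Submodule 𝔽 V)) ⊆ 𝓗 := by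
    rintro _ ⟨F, hF, rfl⟩
    exact (mem_filter.mp hF).2
  have hfree : ¬ ContainsCopy P (g • (B : Set (Submodule 𝔽 V))) := fun hcopy =>
    hF <| (hcopy.smul g⁻¹).mono <| by
      rw [inv_smul_smul]
      exact coe_subset.mpr (filter_subset _ _)
  simpa only [Set.ncard_smul_set, Set.ncard_coe_finset] using hα _ hsub hfree

end ContainsCopy

theorem stmt_14_general {𝔽 V : Type*} [Field 𝔽] [Fintype 𝔽] [AddCommGroup V] [Module 𝔽 V]
    [FiniteDimensional 𝔽 V]
    (P : Type*) [PartialOrder P]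
    (𝓗 : Set (Submodule 𝔽 V))
    (α : ℕ)
    (hα : IsGreatest
      {m | ∃ 𝓖 : Set (Submodule 𝔽 V), 𝓖 ⊆ 𝓗 ∧ ¬ ContainsCopy P 𝓖 ∧ 𝓖.ncard = m} α)
    (𝓕 : Finset (Submodule 𝔽 V)) (hF : ¬ ContainsCopy P (↑𝓕 : Set (Submodule 𝔽 V))) :
    ∑ F ∈ 𝓕,
        (({H | H ∈ 𝓗 ∧ Module.finrank 𝔽 H = Module.finrank 𝔽 F}.ncard : ℚ) /
          ({W : Submodule 𝔽 V | Module.finrank 𝔽 W = Module.finrank 𝔽 F}.ncard : ℚ)) ≤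
      (α : ℚ) := by
  classical
  have : Finite V := Module.finite_of_finite 𝔽
  have : Finite (V ≃ₗ[𝔽] V) := Finite.of_injective _ DFunLike.coe_injective
  have hbound := MulAction.sum_ncard_inter_orbit_div_le 𝓗 𝓕
    (card_filter_smul_mem_le_of_not_containsCopy (fun 𝓖 hsub hfree => hα.2 ⟨𝓖, hsub, hfree, rfl⟩) hF)
  simp only [Submodule.orbit_linearEquiv] at hbound
  exact hbound

theorem stmt_14 {𝔽 V : Type*} [Field 𝔽] [Fintype 𝔽] [AddCommGroup V] [Module 𝔽 V]
    [FiniteDimensional 𝔽 V] (n : ℕ) (hn : Module.finrank 𝔽 V = n)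
    (P : Type*) [PartialOrder P] [Fintype P]
    (v : Module.Basis (Fin n) 𝔽 V) (𝓗 : Set (Submodule 𝔽 V))
    (hsimple : ∀ H ∈ 𝓗, ∃ S : Set (Fin n), H = Submodule.span 𝔽 (⇑v '' S))
    (α : ℕ)
    (hα : IsGreatest
      {m | ∃ 𝓖 : Set (Submodule 𝔽 V), 𝓖 ⊆ 𝓗 ∧ ¬ ContainsCopy P 𝓖 ∧ 𝓖.ncard = m} α)
    (𝓕 : Finset (Submodule 𝔽 V)) (hF : ¬ ContainsCopy P (↑𝓕 : Set (Submodule 𝔽 V))) :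
    ∑ F ∈ 𝓕,
        (({H | H ∈ 𝓗 ∧ Module.finrank 𝔽 H = Module.finrank 𝔽 F}.ncard : ℚ) /
          ({W : Submodule 𝔽 V | Module.finrank 𝔽 W = Module.finrank 𝔽 F}.ncard : ℚ)) ≤
      (α : ℚ) :=
  stmt_14_general P 𝓗 α hα 𝓕 hF
end

section
/- Let V be an n-dimensional F_q-vector space and F a family of subspaces of V with {0} ∉ F and V ∉ F such that Σ_{F ∈ F} 1/[n choose dim F]_q ≤ k for a positive integer k. Then |F| ≤ Σ_q(n,k), the sum of the k largest Gaussian binomial coefficients [n choose i]_q. -/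
/-!
Group the family by dimension: with `a i` members of dimension `i` among the `N i` subspaces of
that dimension, the hypothesis reads `∑ a i / N i ≤ k` with `0 ≤ a i / N i ≤ 1`. Maximising
`∑ a i = ∑ (a i / N i) N i` under these constraints is a fractional knapsack problem, whose optimum
puts full weight on the `k` largest levels `N i`.
-/

open Finset

theorem Finset.exists_subset_card_eq_forall_le {α β : Type*} [DecidableEq α] [LinearOrder β]
    (f : α → β) {k : ℕ} {D : Finset α} (hk : k ≤ #D) :
    ∃ T ⊆ D, #T = k ∧ ∀ i ∈ D \ T, ∀ j ∈ T, f i ≤ f j := by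
  induction k generalizing D with
  | zero => exact ⟨∅, empty_subset _, rfl, by simp⟩
  | succ k ih =>
    obtain ⟨j, hjD, hjmax⟩ := D.exists_max_image f (card_pos.mp (by omega))
    obtain ⟨T, hTD, hTcard, hT⟩ := ih (D := D.erase j) (by rw [card_erase_of_mem hjD]; omega)
    have hjT : j ∉ T := fun h => by simpa using hTD h
    refine ⟨insert j T, insert_subset hjD (hTD.trans (erase_subset _ _)),
      by rw [card_insert_of_notMem hjT, hTcard], ?_⟩
    intro i hi j' hj'
    simp only [mem_sdiff, mem_insert, not_or] at hi
    obtain ⟨hiD, hij, hiT⟩ := hi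
    rcases mem_insert.mp hj' with rfl | hj'T
    · exact hjmax i hiD
    · exact hT i (mem_sdiff.mpr ⟨mem_erase.mpr ⟨hij, hiD⟩, hiT⟩) j' hj'T

theorem Finset.exists_subset_card_eq_sum_le_of_sum_div_le {ι : Type*} [DecidableEq ι]
    {D : Finset ι} {a N : ι → ℕ} {k : ℕ} (haN : ∀ i ∈ D, a i ≤ N i)
    (hsum : ∑ i ∈ D, (a i : ℚ) / N i ≤ k) (hk : k ≤ #D) :
    ∃ T ⊆ D, #T = k ∧ ∑ i ∈ D, a i ≤ ∑ i ∈ T, N i := by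
  obtain ⟨T, hTD, hTcard, hT⟩ := D.exists_subset_card_eq_forall_le N hk
  refine ⟨T, hTD, hTcard, ?_⟩
  set x : ι → ℚ := fun i => (a i : ℚ) / N i with hx
  -- the threshold separating the levels outside `T` from those in `T`
  set m : ℕ := (D \ T).sup N
  have ha_eq : ∀ i ∈ D, (a i : ℚ) = x i * N i := by
    intro i hi
    rcases (N i).eq_zero_or_pos with hN | hN
    · simp [Nat.le_zero.mp (hN ▸ haN i hi), hN]
    · simp [hx, hN.ne']
  have hx_le_one : ∀ i ∈ D, x i ≤ 1 := fun i hi =>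
    div_le_one_of_le₀ (by exact_mod_cast haN i hi) (by positivity)
  have hout : ∑ i ∈ D \ T, (a i : ℚ) ≤ m * ∑ i ∈ D \ T, x i := by
    rw [mul_sum]
    gcongr with i hi
    rw [ha_eq i (mem_sdiff.mp hi).1, mul_comm]
    gcongr
    exact_mod_cast le_sup hi
  have hin : m * ∑ i ∈ T, (1 - x i) ≤ ∑ i ∈ T, ((N i : ℚ) - a i) := by
    rw [mul_sum]
    gcongr with j hj
    have hmN : (m : ℚ) ≤ N j := by exact_mod_cast Finset.sup_le fun i hi => hT i hi j hj
    have hxj : 0 ≤ 1 - x j := sub_nonneg.mpr (hx_le_one j (hTD hj))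
    calc (m : ℚ) * (1 - x j) ≤ N j * (1 - x j) := by gcongr
      _ = N j - a j := by rw [ha_eq j (hTD hj)]; ring
  have hmk : (m : ℚ) * (∑ i ∈ D, x i - k) ≤ 0 :=
    mul_nonpos_of_nonneg_of_nonpos (by positivity) (by linarith)
  rw [← sum_sdiff hTD (f := x)] at hmk
  rw [← Nat.cast_le (α := ℚ), ← sum_sdiff hTD]
  simp only [sum_sub_distrib, sum_const, hTcard, nsmul_eq_mul, mul_one] at hin
  push_cast
  linarith

theorem stmt_19_general {𝔽 V : Type*} [Field 𝔽] [Fintype 𝔽] [AddCommGroup V] [Module 𝔽 V]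
    [FiniteDimensional 𝔽 V] (n k : ℕ) (hn : Module.finrank 𝔽 V = n)
    (𝓕 : Finset (Submodule 𝔽 V))
    (hlym : ∑ F ∈ 𝓕,
        (1 : ℚ) / ({W : Submodule 𝔽 V | Module.finrank 𝔽 W = Module.finrank 𝔽 F}.ncard : ℚ) ≤
        (k : ℚ))
    (Sk : ℕ)
    (hSk : IsGreatest {t | ∃ S : Finset ℕ, S ⊆ Finset.range (n + 1) ∧ S.card = k ∧
        t = ∑ i ∈ S, {W : Submodule 𝔽 V | Module.finrank 𝔽 W = i}.ncard} Sk) :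
    𝓕.card ≤ Sk := by
  classical
  have : Finite V := Module.finite_of_finite 𝔽
  set N : ℕ → ℕ := fun i => {W : Submodule 𝔽 V | Module.finrank 𝔽 W = i}.ncard
  set a : ℕ → ℕ := fun i => #{F ∈ 𝓕 | Module.finrank 𝔽 (F : Submodule 𝔽 V) = i}
  have hdim : ∀ F ∈ 𝓕, Module.finrank 𝔽 F ∈ range (n + 1) := fun F _ =>
    mem_range_succ_iff.mpr (hn ▸ Submodule.finrank_le F)
  have haN : ∀ i ∈ range (n + 1), a i ≤ N i := fun i _ =>
    (Set.ncard_coe_finset _).symm.trans_le (Set.ncard_le_ncard fun W hW => (mem_filter.mp hW).2)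
  have hsum : ∑ i ∈ range (n + 1), (a i : ℚ) / N i ≤ k := by
    rw [← sum_fiberwise_of_maps_to hdim] at hlym
    convert hlym using 2 with i
    rw [sum_congr rfl fun F hF => by rw [(mem_filter.mp hF).2], sum_const, nsmul_eq_mul,
      mul_one_div]
  obtain ⟨S, hS, hScard, -⟩ := hSk.1
  have hk : k ≤ #(range (n + 1)) := hScard ▸ card_le_card hS
  obtain ⟨T, hT, hTcard, hle⟩ := exists_subset_card_eq_sum_le_of_sum_div_le haN hsum hk
  exact (card_eq_sum_card_fiberwise hdim).trans_le <| hle.trans (hSk.2 ⟨T, hT, hTcard, rfl⟩)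

theorem stmt_19 {𝔽 V : Type*} [Field 𝔽] [Fintype 𝔽] [AddCommGroup V] [Module 𝔽 V]
    [FiniteDimensional 𝔽 V] (n k : ℕ) (hn : Module.finrank 𝔽 V = n) (hk : 1 ≤ k)
    (𝓕 : Finset (Submodule 𝔽 V)) (hbot : ⊥ ∉ 𝓕) (htop : ⊤ ∉ 𝓕)
    (hlym : ∑ F ∈ 𝓕,
        (1 : ℚ) / ({W : Submodule 𝔽 V | Module.finrank 𝔽 W = Module.finrank 𝔽 F}.ncard : ℚ) ≤
        (k : ℚ))
    (Sk : ℕ)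
    (hSk : IsGreatest {t | ∃ S : Finset ℕ, S ⊆ Finset.range (n + 1) ∧ S.card = k ∧
        t = ∑ i ∈ S, {W : Submodule 𝔽 V | Module.finrank 𝔽 W = i}.ncard} Sk) :
    𝓕.card ≤ Sk :=
  stmt_19_general n k hn 𝓕 hlym Sk hSk
end
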